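/- Let f = (f_1,…,f_q) be a vector polynomial and S ⊆ ℝⁿ a nonempty set. (i) If SOL^w(S_∞, f^∞) = ∅, then f_i is unbounded from below on S for every i ∈ {1,…,q}. (ii) If SOL^s(S_∞, f^∞) = ∅, then f_{i₀} is unbounded from below on S for some i₀ ∈ {1,…,q}. -/

import Mathlib

open Filter Topology MvPolynomial Bornology

noncomputable section

/-- The asymptotic (recession) cone of a set `A ⊆ ℝⁿ`. -/
def asymCone {n : ℕ} (A : Set (Fin n → ℝ)) : Set (Fin n → ℝ) :=
  {v | ∃ (t : ℕ → ℝ) (x : ℕ → (Fin n → ℝ)),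
    Filter.Tendsto t Filter.atTop Filter.atTop ∧ (∀ k, x k ∈ A) ∧
    Filter.Tendsto (fun k => (t k)⁻¹ • x k) Filter.atTop (nhds v)}

/-- Pareto efficient solutions of the vector map `g` on `C`. -/
def SOLs {n q : ℕ} (C : Set (Fin n → ℝ)) (g : Fin q → (Fin n → ℝ) → ℝ) :
    Set (Fin n → ℝ) :=
  {x | x ∈ C ∧ ¬ ∃ y ∈ C, (∀ i, g i y ≤ g i x) ∧ (∃ i, g i y ≠ g i x)}

/-- Weak Pareto efficient solutions of the vector map `g` on `C`. -/
def SOLw {n q : ℕ} (C : Set (Fin n → ℝ)) (g : Fin q → (Fin n → ℝ) → ℝ) :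
    Set (Fin n → ℝ) :=
  {x | x ∈ C ∧ ¬ ∃ y ∈ C, ∀ i, g i y < g i x}

/-- Global minimizers of a scalar function `p` on `C`. -/
def SOLmin {n : ℕ} (C : Set (Fin n → ℝ)) (p : (Fin n → ℝ) → ℝ) :
    Set (Fin n → ℝ) :=
  {x | x ∈ C ∧ ∀ y ∈ C, p x ≤ p y}

/-- The recession polynomial (leading term: top-degree homogeneous part) of a
polynomial, as a function on `ℝⁿ`. -/
noncomputable def recPoly {n : ℕ} (p : MvPolynomial (Fin n) ℝ) : (Fin n → ℝ) → ℝ :=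
  fun x => MvPolynomial.eval x (MvPolynomial.homogeneousComponent p.totalDegree p)

/-! The recession polynomial `p^∞` of a polynomial `p` of degree `D` is the value at `s = 0` of its
homogenization `P(u, s) = ∑_{d ≤ D} s^(D-d) p_d(u)`, which is jointly continuous and satisfies
`P(s • x, s) = s^D p(x)`. Hence if `x_k ∈ S`, `t_k → ∞` and `x_k / t_k → v`, then
`p(x_k) / t_k^D → p^∞(v)`, so `p` is unbounded below on `S` as soon as `p^∞(v) < 0` for some
`v ∈ S_∞`. Since `0 ∈ S_∞` and `p^∞(0) = 0` when `D ≥ 1`, an empty (weak) Pareto set of `f^∞` on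
`S_∞` yields `v ∈ S_∞` with `f_i^∞(v) < 0` for all (some) `i`. -/

theorem MvPolynomial.IsHomogeneous.eval_smul {σ R : Type*} [CommSemiring R]
    {p : MvPolynomial σ R} {D : ℕ} (hp : p.IsHomogeneous D) (c : R) (x : σ → R) :
    eval (c • x) p = c ^ D * eval x p := by
  rw [eval_eq, eval_eq, Finset.mul_sum]
  refine Finset.sum_congr rfl fun m hm => ?_
  simp only [Pi.smul_apply, smul_eq_mul, mul_pow, Finset.prod_mul_distrib,
    Finset.prod_pow_eq_pow_sum, ← hp.degree_eq_sum_deg_support hm]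
  ring

theorem recPoly_zero {n : ℕ} {p : MvPolynomial (Fin n) ℝ} (hdeg : p.totalDegree ≠ 0) :
    recPoly p 0 = 0 := by
  simpa [recPoly, zero_pow hdeg] using
    (homogeneousComponent_isHomogeneous p.totalDegree p).eval_smul 0 0

theorem zero_mem_asymCone {n : ℕ} {S : Set (Fin n → ℝ)} (hS : S.Nonempty) :
    (0 : Fin n → ℝ) ∈ asymCone S := by
  obtain ⟨x₀, hx₀⟩ := hS
  have ht : Tendsto (fun k : ℕ => (k : ℝ) + 1) atTop atTop :=
    tendsto_atTop_add_const_right _ 1 tendsto_natCast_atTop_atTop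
  refine ⟨_, fun _ => x₀, ht, fun _ => hx₀, ?_⟩
  simpa using ht.inv_tendsto_atTop.smul_const x₀

def homogenizedEval {n : ℕ} (p : MvPolynomial (Fin n) ℝ) (u : Fin n → ℝ) (s : ℝ) : ℝ :=
  ∑ d ∈ Finset.range (p.totalDegree + 1),
    s ^ (p.totalDegree - d) * eval u (homogeneousComponent d p)

theorem continuous_homogenizedEval {n : ℕ} (p : MvPolynomial (Fin n) ℝ) :
    Continuous fun us : (Fin n → ℝ) × ℝ => homogenizedEval p us.1 us.2 := by
  unfold homogenizedEval
  exact continuous_finsetSum _ fun d _ =>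
    (continuous_snd.pow _).mul ((continuous_eval _).comp continuous_fst)

theorem homogenizedEval_zero {n : ℕ} (p : MvPolynomial (Fin n) ℝ) (u : Fin n → ℝ) :
    homogenizedEval p u 0 = recPoly p u := by
  rw [homogenizedEval, Finset.sum_eq_single_of_mem _ (Finset.self_mem_range_succ _)]
  · simp [recPoly]
  · intro d hd hne
    have : p.totalDegree - d ≠ 0 := by grind
    simp [zero_pow this]

theorem homogenizedEval_smul {n : ℕ} (p : MvPolynomial (Fin n) ℝ) (s : ℝ) (x : Fin n → ℝ) :
    homogenizedEval p (s • x) s = s ^ p.totalDegree * eval x p := by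
  conv_rhs => enter [2]; rw [← sum_homogeneousComponent p]
  rw [map_sum, Finset.mul_sum]
  refine Finset.sum_congr rfl fun d hd => ?_
  rw [(homogeneousComponent_isHomogeneous d p).eval_smul, ← mul_assoc, ← pow_add,
    Nat.sub_add_cancel (Finset.mem_range_succ_iff.mp hd)]

theorem tendsto_eval_div_pow_totalDegree {n : ℕ} {α : Type*} {l : Filter α}
    (p : MvPolynomial (Fin n) ℝ) {t : α → ℝ} {x : α → Fin n → ℝ} {v : Fin n → ℝ}
    (ht : Tendsto t l atTop) (hx : Tendsto (fun k => (t k)⁻¹ • x k) l (𝓝 v)) :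
    Tendsto (fun k => eval (x k) p / t k ^ p.totalDegree) l (𝓝 (recPoly p v)) := by
  have hlim := ((continuous_homogenizedEval p).tendsto (v, 0)).comp
    (hx.prodMk_nhds ht.inv_tendsto_atTop)
  simpa [Function.comp_def, homogenizedEval_smul, homogenizedEval_zero, div_eq_inv_mul]
    using hlim

theorem not_bddBelow_eval_of_recPoly_neg {n : ℕ} {p : MvPolynomial (Fin n) ℝ}
    (hdeg : p.totalDegree ≠ 0) {S : Set (Fin n → ℝ)} {v : Fin n → ℝ} (hv : v ∈ asymCone S)
    (hneg : recPoly p v < 0) : ¬ ∃ m : ℝ, ∀ x ∈ S, m ≤ eval x p := by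
  obtain ⟨t, x, ht, hxS, hx⟩ := hv
  have hbot : Tendsto (fun k => eval (x k) p) atTop atBot := by
    refine (((tendsto_pow_atTop hdeg).comp ht).atTop_mul_neg hneg
      (tendsto_eval_div_pow_totalDegree p ht hx)).congr' ?_
    filter_upwards [ht.eventually_ne_atTop 0] with k hk
    simp [mul_div_cancel₀ _ (pow_ne_zero _ hk)]
  rintro ⟨m, hm⟩
  obtain ⟨k, hk⟩ := (hbot.eventually_lt_atBot m).exists
  exact (hm _ (hxS k)).not_gt hk

theorem stmt2 {n q : ℕ} (f : Fin q → MvPolynomial (Fin n) ℝ)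
    (hdeg : ∀ i, 1 ≤ (f i).totalDegree)
    (S : Set (Fin n → ℝ)) (hSne : S.Nonempty) :
    (SOLw (asymCone S) (fun i => recPoly (f i)) = ∅ →
      ∀ i, ¬ ∃ m : ℝ, ∀ x ∈ S, m ≤ eval x (f i)) ∧
    (SOLs (asymCone S) (fun i => recPoly (f i)) = ∅ →
      ∃ i, ¬ ∃ m : ℝ, ∀ x ∈ S, m ≤ eval x (f i)) := by
  have h0 : (0 : Fin n → ℝ) ∈ asymCone S := zero_mem_asymCone hSne
  have hdeg0 i : (f i).totalDegree ≠ 0 := Nat.one_le_iff_ne_zero.mp (hdeg i)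
  have hrec0 i : recPoly (f i) 0 = 0 := recPoly_zero (hdeg0 i)
  refine ⟨fun hw i => ?_, fun hs => ?_⟩
  · obtain ⟨v, hv, hlt⟩ : ∃ v ∈ asymCone S, ∀ i, recPoly (f i) v < recPoly (f i) 0 := by
      by_contra h
      exact hw.subset ⟨h0, h⟩
    exact not_bddBelow_eval_of_recPoly_neg (hdeg0 i) hv (hrec0 i ▸ hlt i)
  · obtain ⟨v, hv, hle, i, hne⟩ : ∃ v ∈ asymCone S, (∀ i, recPoly (f i) v ≤ recPoly (f i) 0) ∧
        ∃ i, recPoly (f i) v ≠ recPoly (f i) 0 := by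
      by_contra h
      exact hs.subset ⟨h0, h⟩
    exact ⟨i, not_bddBelow_eval_of_recPoly_neg (hdeg0 i) hv
      (hrec0 i ▸ (hle i).lt_of_ne hne)⟩
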